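/- Let U ⊆ U′ ⊆ V be subspaces and let ϖ : U × U′ → ℝ be a bilinear map whose restriction to U × U is skew-symmetric. If F is an isotropic subspace of V × V* such that pr_V F = U, pr_V F^⊥ = U′, and a(w) = ϖ(v,w) for every (v,a) ∈ F and (w,b) ∈ F^⊥, then F = {(v,a) ∈ V × V* : v ∈ U and a(w) = ϖ(v,w) for all w ∈ U′}. In other words, the isotropic subspace with prescribed projections U, U′ and prescribed pairing ϖ is unique. -/

import Mathlib

open Module LinearMap

/-!
Every `(v, a) ∈ F` satisfies `a(w) = ϖ(v, w)` on `U′ = pr_V F^⊥` by the pairing hypothesis. Conversely,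
if `(v, a)` satisfies these equations, pick `(v, a₀) ∈ F` over `v ∈ U = pr_V F`: then `a - a₀`
annihilates `pr_V F^⊥`, which says exactly that `(0, a - a₀) ∈ F^⊥⊥ = F`, since the pairing metric
is nondegenerate.
-/

/-- The pairing metric `g((X,α),(Y,β)) = (1/2)(α(Y) + β(X))` on `V × V*`. -/
noncomputable def bigG (V : Type*) [AddCommGroup V] [Module ℝ V] :
    LinearMap.BilinForm ℝ (V × Module.Dual ℝ V) :=
  LinearMap.mk₂ ℝ (fun p q => (1 / 2 : ℝ) * (p.2 q.1 + q.2 p.1))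
    (fun p p' q => by simp; ring)
    (fun c p q => by simp; ring)
    (fun p q q' => by simp; ring)
    (fun c p q => by simp; ring)

/-- The `g`-orthogonal complement of a subspace of `V × V*`. -/
noncomputable def gOrth {V : Type*} [AddCommGroup V] [Module ℝ V]
    (E : Submodule ℝ (V × Module.Dual ℝ V)) : Submodule ℝ (V × Module.Dual ℝ V) :=
  LinearMap.BilinForm.orthogonal (bigG V) E

section PairingMetric

variable {V : Type*} [AddCommGroup V] [Module ℝ V]

lemma bigG_apply (p q : V × Dual ℝ V) :
    bigG V p q = (1 / 2 : ℝ) * (p.2 q.1 + q.2 p.1) := rfl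

lemma bigG_isSymm : (bigG V).IsSymm :=
  ⟨fun p q => by simp only [bigG_apply]; ring⟩

lemma bigG_nondegenerate [FiniteDimensional ℝ V] : (bigG V).Nondegenerate := by
  refine (IsRefl.nondegenerate_iff_separatingLeft (B := bigG V) bigG_isSymm.isRefl).mpr
    fun p hp => Prod.ext ?_ ?_
  · refine (Module.forall_dual_apply_eq_zero_iff ℝ p.1).mp fun φ => ?_
    simpa [bigG_apply] using hp (0, φ)
  · ext y
    simpa [bigG_apply] using hp (y, 0)

lemma gOrth_gOrth [FiniteDimensional ℝ V] (E : Submodule ℝ (V × Dual ℝ V)) :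
    gOrth (gOrth E) = E :=
  BilinForm.orthogonal_orthogonal bigG_nondegenerate bigG_isSymm.isRefl E

lemma zero_prod_mem_gOrth_iff (E : Submodule ℝ (V × Dual ℝ V)) (c : Dual ℝ V) :
    ((0 : V), c) ∈ gOrth E ↔ ∀ x ∈ E.map (fst ℝ V (Dual ℝ V)), c x = 0 := by
  simp [gOrth, BilinForm.mem_orthogonal_iff, bigG_apply]

lemma zero_prod_mem_of_forall_fst_gOrth [FiniteDimensional ℝ V]
    (F : Submodule ℝ (V × Dual ℝ V)) {c : Dual ℝ V}
    (hc : ∀ x ∈ (gOrth F).map (fst ℝ V (Dual ℝ V)), c x = 0) : ((0 : V), c) ∈ F := by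
  rw [← gOrth_gOrth F, zero_prod_mem_gOrth_iff]
  exact hc

end PairingMetric

theorem stmt3_general (V : Type*) [AddCommGroup V] [Module ℝ V] [FiniteDimensional ℝ V]
    (U U' : Submodule ℝ V)
    (ϖ : U →ₗ[ℝ] U' →ₗ[ℝ] ℝ)
    (F : Submodule ℝ (V × Dual ℝ V))
    (hprF : Submodule.map (LinearMap.fst ℝ V (Dual ℝ V)) F = U)
    (hprF' : Submodule.map (LinearMap.fst ℝ V (Dual ℝ V)) (gOrth F) = U')
    (hpair : ∀ (v : U) (w : U') (a b : Dual ℝ V),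
      ((v : V), a) ∈ F → ((w : V), b) ∈ gOrth F → a w = ϖ v w) :
    (F : Set (V × Dual ℝ V)) =
      {p : V × Dual ℝ V | ∃ hv : p.1 ∈ U, ∀ w : U', p.2 w = ϖ ⟨p.1, hv⟩ w} := by
  have fst_mem {p} (hp : p ∈ F) : p.1 ∈ U := hprF ▸ ⟨p, hp, rfl⟩
  have pairing {p} (hp : p ∈ F) (w : U') : p.2 w = ϖ ⟨p.1, fst_mem hp⟩ w := by
    obtain ⟨q, hq, hqw⟩ : (w : V) ∈ (gOrth F).map (fst ℝ V (Dual ℝ V)) := hprF' ▸ w.2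
    exact hpair _ w p.2 q.2 hp ((show ((w : V), q.2) = q from Prod.ext hqw.symm rfl) ▸ hq)
  ext ⟨x, a⟩
  refine ⟨fun hp => ⟨fst_mem hp, pairing hp⟩, fun ⟨hx, hxa⟩ => ?_⟩
  obtain ⟨⟨x, a₀⟩, hq, rfl⟩ : x ∈ F.map (fst ℝ V (Dual ℝ V)) := hprF ▸ hx
  have hdiff : ((0 : V), a - a₀) ∈ F := by
    refine zero_prod_mem_of_forall_fst_gOrth F fun y hy => ?_
    rw [hprF'] at hy
    simp [hxa ⟨y, hy⟩, pairing hq ⟨y, hy⟩]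
  simpa using F.add_mem hq hdiff

/-- Uniqueness: an isotropic subspace `F` with prescribed projections
`pr_V F = U`, `pr_V F^⊥ = U′` and prescribed pairing `ϖ` must equal
`{(v,a) : v ∈ U, a(w) = ϖ(v,w) ∀ w ∈ U′}`. -/
theorem stmt3 (V : Type*) [AddCommGroup V] [Module ℝ V] [FiniteDimensional ℝ V]
    (U U' : Submodule ℝ V) (hUU' : U ≤ U')
    (ϖ : U →ₗ[ℝ] U' →ₗ[ℝ] ℝ)
    (hskew : ∀ u w : U, ϖ u (Submodule.inclusion hUU' w) = -ϖ w (Submodule.inclusion hUU' u))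
    (F : Submodule ℝ (V × Dual ℝ V))
    (hiso : ∀ p ∈ F, ∀ q ∈ F, bigG V p q = 0)
    (hprF : Submodule.map (LinearMap.fst ℝ V (Dual ℝ V)) F = U)
    (hprF' : Submodule.map (LinearMap.fst ℝ V (Dual ℝ V)) (gOrth F) = U')
    (hpair : ∀ (v : U) (w : U') (a b : Dual ℝ V),
      ((v : V), a) ∈ F → ((w : V), b) ∈ gOrth F → a w = ϖ v w) :
    (F : Set (V × Dual ℝ V)) =
      {p : V × Dual ℝ V | ∃ hv : p.1 ∈ U, ∀ w : U', p.2 w = ϖ ⟨p.1, hv⟩ w} :=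
  stmt3_general V U U' ϖ F hprF hprF' hpair
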